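/- arXiv:math/0601560 — 2 statements merged into one kernel-verified Lean document; each statement's English description precedes it below -/
import Mathlib

section
/- Let σ₁ be the permutation of {0,…,r−1} given by i ↦ i+1 mod r, and let σ₂ be any permutation of {0,…,r−1} satisfying σ₂(i) = 2i for all even i with 0 < i < r/2. Then for every integer i with 0 < i < r/2 having binary expansion d_k…d_1d_0 (with d_k = 1), the composite permutation σ₁^{2d₀} ∘ σ₂ ∘ σ₁^{2d₁} ∘ … ∘ σ₂ ∘ σ₁^{2d_{k−1}} ∘ σ₂ ∘ σ₁^{2d_k} maps 0 to 2i. -/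
open Equiv

/-- The word `σ₁^{2d₀} ∘ σ₂ ∘ σ₁^{2d₁} ∘ … ∘ σ₂ ∘ σ₁^{2d_k}` built from the
little-endian list of binary digits `[d₀, d₁, …, d_k]`. -/
def binWord {r : ℕ} (σ₁ σ₂ : Perm (Fin r)) : List Bool → Perm (Fin r)
  | [] => 1
  | [d] => σ₁ ^ (2 * (if d then 1 else 0))
  | d :: rest => σ₁ ^ (2 * (if d then 1 else 0)) * σ₂ * binWord σ₁ σ₂ rest

theorem binary_word_maps_zero_to_double
    (r : ℕ) (σ₁ σ₂ : Perm (Fin r))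
    (h₁ : ∀ i : Fin r, ((σ₁ i : Fin r) : ℕ) = ((i : ℕ) + 1) % r)
    (h₂ : ∀ i : Fin r, Even (i : ℕ) → 0 < (i : ℕ) → 2 * (i : ℕ) < r →
      ((σ₂ i : Fin r) : ℕ) = 2 * (i : ℕ)) :
    ∀ i : ℕ, 0 < i → (h2i : 2 * i < r) →
      ((binWord σ₁ σ₂ (Nat.bits i) ⟨0, by omega⟩ : Fin r) : ℕ) = 2 * i := by
  intro i
  induction i using Nat.strong_induction_on with
  | _ i IH =>
  intro hi h2i
  rcases eq_or_lt_of_le (show 1 ≤ i from hi) with h1 | h2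
  · -- i = 1
    have hi1 : i = 1 := h1.symm
    subst hi1
    rw [Nat.one_bits]
    have hw : binWord σ₁ σ₂ [true] = σ₁ ^ 2 := by simp [binWord]
    rw [hw, pow_two, Perm.mul_apply, h₁, h₁]
    simp only [Fin.val_mk]
    have e1 : (0 + 1) % r = 1 := Nat.mod_eq_of_lt (by omega)
    rw [e1, Nat.mod_eq_of_lt (by omega)]
  · -- i ≥ 2
    have hm0 : 0 < i / 2 := by omega
    have hmr : 2 * (i / 2) < r := by omega
    obtain ⟨x, xs, hx⟩ : ∃ x xs, Nat.bits (i / 2) = x :: xs := by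
      rcases Nat.even_or_odd (i / 2) with ⟨q, hq⟩ | ⟨q, hq⟩
      · exact ⟨false, q.bits, by
          rw [show i / 2 = 2 * q by omega, Nat.bit0_bits q (by omega)]⟩
      · exact ⟨true, q.bits, by rw [show i / 2 = 2 * q + 1 by omega, Nat.bit1_bits q]⟩
    have ha := IH (i / 2) (by omega) hm0 hmr
    set a : Fin r := binWord σ₁ σ₂ (Nat.bits (i / 2)) ⟨0, by omega⟩ with haa
    have hσ₂ : ((σ₂ a : Fin r) : ℕ) = 2 * (2 * (i / 2)) := by
      rw [h₂ a (by rw [ha]; exact even_two_mul _) (by omega) (by omega), ha]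
    rcases Nat.even_or_odd i with he | ho
    · obtain ⟨c, hc⟩ := he
      have hbits : i.bits = false :: x :: xs := by
        rw [show i = 2 * (i / 2) by omega, Nat.bit0_bits _ (by omega), hx]
      rw [hbits]
      have hw : binWord σ₁ σ₂ (false :: x :: xs)
          = σ₁ ^ (2 * (if false then 1 else 0)) * σ₂ * binWord σ₁ σ₂ (x :: xs) := rfl
      rw [hw, show (2 * (if false then 1 else 0)) = 0 by simp, pow_zero,
        Perm.mul_apply, Perm.mul_apply, Perm.one_apply, ← hx, ← haa, hσ₂]
      omega
    · obtain ⟨c, hc⟩ := ho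
      have hbits : i.bits = true :: x :: xs := by
        rw [show i = 2 * (i / 2) + 1 by omega, Nat.bit1_bits, hx]
      rw [hbits]
      have hw : binWord σ₁ σ₂ (true :: x :: xs)
          = σ₁ ^ (2 * (if true then 1 else 0)) * σ₂ * binWord σ₁ σ₂ (x :: xs) := rfl
      rw [hw, show (2 * (if true then 1 else 0)) = 2 by simp, pow_two,
        Perm.mul_apply, Perm.mul_apply, Perm.mul_apply, h₁, h₁, ← hx, ← haa, hσ₂]
      have e1 : (2 * (2 * (i / 2)) + 1) % r = 2 * (2 * (i / 2)) + 1 :=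
        Nat.mod_eq_of_lt (by omega)
      rw [e1, Nat.mod_eq_of_lt (by omega)]
      omega
end

section
/- With σ₁ the cyclic shift and σ₂ as above, for every integer m with 0 ≤ m < r there exists a word w in σ₁ and σ₂ of length at most 3(1 + log₂ m) + 1 (and length 1 for m ∈ {0,1}) such that w(0) = m. In particular there exists a constant D > 0 (independent of r) such that every element of {0,…,r−1} is reachable from 0 by a word in {σ₁, σ₂} of length at most D·log r for r ≥ 2. -/
open Equiv

lemma aux_even {r : ℕ} (hr : 0 < r) (σ₁ σ₂ : Perm (Fin r))
    (h1 : ∀ i : Fin r, ((σ₁ i : Fin r) : ℕ) = ((i : ℕ) + 1) % r)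
    (h2 : ∀ i : Fin r, Even (i : ℕ) → 0 < (i : ℕ) → 2 * (i : ℕ) < r →
        ((σ₂ i : Fin r) : ℕ) = 2 * (i : ℕ)) :
    ∀ k : ℕ, 1 ≤ k → 2 * k < r → ∃ l : List (Perm (Fin r)),
      (∀ g ∈ l, g = σ₁ ∨ g = σ₂) ∧ l.length ≤ 3 * Nat.log 2 k + 2 ∧
      ((l.prod ⟨0, hr⟩ : Fin r) : ℕ) = 2 * k := by
  intro k
  induction k using Nat.strong_induction_on with
  | _ k IH =>
    intro hk1 hkr
    rcases eq_or_lt_of_le hk1 with h1k | h2k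
    · -- k = 1, word [σ₁, σ₁]
      refine ⟨[σ₁, σ₁], by simp, by simp, ?_⟩
      have e1 : ((σ₁ ⟨0, hr⟩ : Fin r) : ℕ) = 1 := by
        rw [h1]
        show (0 + 1) % r = 1
        exact Nat.mod_eq_of_lt (by omega)
      have e2 : ((σ₁ (σ₁ ⟨0, hr⟩) : Fin r) : ℕ) = 2 := by
        rw [h1, e1]
        exact Nat.mod_eq_of_lt (by omega)
      simpa [← h1k] using e2
    · -- k ≥ 2
      have hk' : 1 ≤ k / 2 := Nat.one_le_div_iff (by norm_num) |>.2 (by omega)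
      have hk'r : 2 * (k / 2) < r := by omega
      obtain ⟨l, hl, hlen, hval⟩ := IH (k / 2) (by omega) hk' hk'r
      have hlog : Nat.log 2 (k / 2) + 1 ≤ Nat.log 2 k := by
        calc Nat.log 2 (k / 2) + 1 = Nat.log 2 ((k / 2) * 2) :=
              (Nat.log_mul_base (by norm_num) (by omega)).symm
          _ ≤ Nat.log 2 k := Nat.log_mono_right (by omega)
      set e : Fin r := l.prod ⟨0, hr⟩ with he
      have hσ₂ : ((σ₂ e : Fin r) : ℕ) = 4 * (k / 2) := by
        rw [h2 e (by rw [hval]; exact even_two_mul _) (by omega) (by rw [hval]; omega), hval]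
        ring
      by_cases hb : k % 2 = 0
      · refine ⟨σ₂ :: l, ?_, ?_, ?_⟩
        · intro g hg
          rcases List.mem_cons.1 hg with h | h
          · exact Or.inr h
          · exact hl g h
        · simp only [List.length_cons]; omega
        · have : (σ₂ :: l).prod ⟨0, hr⟩ = σ₂ e := by
            rw [List.prod_cons, Perm.mul_apply]
          rw [this, hσ₂]; omega
      · refine ⟨σ₁ :: σ₁ :: σ₂ :: l, ?_, ?_, ?_⟩
        · intro g hg
          rcases List.mem_cons.1 hg with h | h
          · exact Or.inl h
          rcases List.mem_cons.1 h with h' | h'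
          · exact Or.inl h'
          rcases List.mem_cons.1 h' with h'' | h''
          · exact Or.inr h''
          · exact hl g h''
        · simp only [List.length_cons]; omega
        · have hp : (σ₁ :: σ₁ :: σ₂ :: l).prod ⟨0, hr⟩ = σ₁ (σ₁ (σ₂ e)) := by
            simp [List.prod_cons, Perm.mul_apply, he]
          have e1 : ((σ₁ (σ₂ e) : Fin r) : ℕ) = 4 * (k / 2) + 1 := by
            rw [h1, hσ₂]
            exact Nat.mod_eq_of_lt (by omega)
          have e2 : ((σ₁ (σ₁ (σ₂ e)) : Fin r) : ℕ) = 4 * (k / 2) + 2 := by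
            rw [h1, e1]
            exact Nat.mod_eq_of_lt (by omega)
          rw [hp, e2]; omega

lemma part1 (r : ℕ) (hr : 0 < r) (σ₁ σ₂ : Perm (Fin r))
    (h1 : ∀ i : Fin r, ((σ₁ i : Fin r) : ℕ) = ((i : ℕ) + 1) % r)
    (h2 : ∀ i : Fin r, Even (i : ℕ) → 0 < (i : ℕ) → 2 * (i : ℕ) < r →
        ((σ₂ i : Fin r) : ℕ) = 2 * (i : ℕ))
    (aux : ∀ k : ℕ, 1 ≤ k → 2 * k < r → ∃ l : List (Perm (Fin r)),
      (∀ g ∈ l, g = σ₁ ∨ g = σ₂) ∧ l.length ≤ 3 * Nat.log 2 k + 2 ∧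
      ((l.prod ⟨0, hr⟩ : Fin r) : ℕ) = 2 * k)
    (m : Fin r) :
    ∃ l : List (Perm (Fin r)),
        (∀ g ∈ l, g = σ₁ ∨ g = σ₂) ∧
        ((m : ℕ) ≤ 1 → l.length ≤ 1) ∧
        (l.length : ℝ) ≤ 3 * (1 + Real.logb 2 (m : ℕ)) + 1 ∧
        l.prod ⟨0, hr⟩ = m := by
  have hm := m.isLt
  rcases Nat.lt_or_ge (m : ℕ) 2 with hsm | hbig
  · rcases Nat.lt_or_ge (m : ℕ) 1 with h0 | h1'
    · -- m = 0
      refine ⟨[], by simp, by simp, ?_, ?_⟩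
      · simp [Real.logb]
        positivity
      · simp only [List.prod_nil, Perm.one_apply]
        exact Fin.ext (show 0 = (m : ℕ) by omega)
    · -- m = 1
      refine ⟨[σ₁], by simp, by simp, ?_, ?_⟩
      · have : Real.logb 2 ((m : ℕ) : ℝ) = 0 := by
          have : ((m : ℕ) : ℝ) = 1 := by norm_cast; omega
          rw [this, Real.logb_one]
        rw [this]; norm_num
      · simp only [List.prod_singleton]
        apply Fin.ext
        rw [h1]
        show (0 + 1) % r = (m : ℕ)
        rw [Nat.mod_eq_of_lt (by omega)]; omega
  · -- m ≥ 2
    have hk1 : 1 ≤ (m : ℕ) / 2 := by omega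
    have hklog : ((Nat.log 2 ((m : ℕ) / 2)) : ℝ) ≤ Real.logb 2 ((m : ℕ) : ℝ) := by
      calc ((Nat.log 2 ((m : ℕ) / 2)) : ℝ) ≤ Real.logb 2 (((m : ℕ) / 2 : ℕ) : ℝ) := by
            exact_mod_cast Real.natLog_le_logb ((m : ℕ) / 2) 2
        _ ≤ Real.logb 2 ((m : ℕ) : ℝ) := by
            apply (Real.logb_le_logb (by norm_num) (by positivity) (by positivity)).2
            exact_mod_cast Nat.div_le_self _ _
    rcases Nat.even_or_odd (m : ℕ) with hev | hod
    · -- m even: m = 2 * (m/2)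
      obtain ⟨l, hl, hlen, hval⟩ := aux ((m : ℕ) / 2) hk1 (by omega)
      refine ⟨l, hl, by omega, ?_, ?_⟩
      · calc (l.length : ℝ) ≤ 3 * (Nat.log 2 ((m : ℕ) / 2) : ℝ) + 2 := by
              exact_mod_cast hlen
          _ ≤ 3 * (1 + Real.logb 2 ((m : ℕ) : ℝ)) + 1 := by nlinarith
      · apply Fin.ext; rw [hval]
        obtain ⟨t, ht⟩ := hev; omega
    · -- m odd
      obtain ⟨l, hl, hlen, hval⟩ := aux ((m : ℕ) / 2) hk1 (by omega)
      refine ⟨σ₁ :: l, ?_, by omega, ?_, ?_⟩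
      · intro g hg
        rcases List.mem_cons.1 hg with h | h
        · exact Or.inl h
        · exact hl g h
      · have hlen' : (l.length : ℝ) ≤ 3 * (Nat.log 2 ((m : ℕ) / 2) : ℝ) + 2 := by
          exact_mod_cast hlen
        have : ((σ₁ :: l).length : ℝ) = (l.length : ℝ) + 1 := by
          push_cast [List.length_cons]; ring
        rw [this]; nlinarith
      · obtain ⟨t, ht⟩ := hod
        apply Fin.ext
        rw [List.prod_cons, Perm.mul_apply, h1, hval]
        show (2 * ((m : ℕ) / 2) + 1) % r = (m : ℕ)
        rw [Nat.mod_eq_of_lt (by omega)]; omega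

/-- Every element of `Fin r` is reachable from `0` by a short word in the cyclic
shift `σ₁` and any permutation `σ₂` doubling the small even numbers; moreover
there is a universal constant `D > 0` such that words of length `D log r` suffice. -/
theorem short_words_reach_every_coset :
    (∀ (r : ℕ) (hr : 0 < r) (σ₁ σ₂ : Perm (Fin r)),
      (∀ i : Fin r, ((σ₁ i : Fin r) : ℕ) = ((i : ℕ) + 1) % r) →
      (∀ i : Fin r, Even (i : ℕ) → 0 < (i : ℕ) → 2 * (i : ℕ) < r →
        ((σ₂ i : Fin r) : ℕ) = 2 * (i : ℕ)) →
      ∀ m : Fin r, ∃ l : List (Perm (Fin r)),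
        (∀ g ∈ l, g = σ₁ ∨ g = σ₂) ∧
        ((m : ℕ) ≤ 1 → l.length ≤ 1) ∧
        (l.length : ℝ) ≤ 3 * (1 + Real.logb 2 (m : ℕ)) + 1 ∧
        l.prod ⟨0, hr⟩ = m) ∧
    ∃ D : ℝ, 0 < D ∧
      ∀ (r : ℕ) (hr : 2 ≤ r) (σ₁ σ₂ : Perm (Fin r)),
        (∀ i : Fin r, ((σ₁ i : Fin r) : ℕ) = ((i : ℕ) + 1) % r) →
        (∀ i : Fin r, Even (i : ℕ) → 0 < (i : ℕ) → 2 * (i : ℕ) < r →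
          ((σ₂ i : Fin r) : ℕ) = 2 * (i : ℕ)) →
        ∀ m : Fin r, ∃ l : List (Perm (Fin r)),
          (∀ g ∈ l, g = σ₁ ∨ g = σ₂) ∧
          (l.length : ℝ) ≤ D * Real.log r ∧
          l.prod ⟨0, by omega⟩ = m := by
  have P1 : ∀ (r : ℕ) (hr : 0 < r) (σ₁ σ₂ : Perm (Fin r)),
      (∀ i : Fin r, ((σ₁ i : Fin r) : ℕ) = ((i : ℕ) + 1) % r) →
      (∀ i : Fin r, Even (i : ℕ) → 0 < (i : ℕ) → 2 * (i : ℕ) < r →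
        ((σ₂ i : Fin r) : ℕ) = 2 * (i : ℕ)) →
      ∀ m : Fin r, ∃ l : List (Perm (Fin r)),
        (∀ g ∈ l, g = σ₁ ∨ g = σ₂) ∧
        ((m : ℕ) ≤ 1 → l.length ≤ 1) ∧
        (l.length : ℝ) ≤ 3 * (1 + Real.logb 2 (m : ℕ)) + 1 ∧
        l.prod ⟨0, hr⟩ = m := by
    intro r hr σ₁ σ₂ h1 h2 m
    exact part1 r hr σ₁ σ₂ h1 h2 (aux_even hr σ₁ σ₂ h1 h2) m
  refine ⟨P1, 7 / Real.log 2, by positivity, ?_⟩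
  intro r hr σ₁ σ₂ h1 h2 m
  obtain ⟨l, hl, hsmall, hlen, hprod⟩ := P1 r (by omega) σ₁ σ₂ h1 h2 m
  refine ⟨l, hl, ?_, hprod⟩
  have hlog2pos : (0 : ℝ) < Real.log 2 := Real.log_pos (by norm_num)
  have hlogr : Real.log 2 ≤ Real.log r := by
    apply Real.log_le_log (by norm_num)
    exact_mod_cast hr
  rcases Nat.eq_zero_or_pos (m : ℕ) with h0 | hpos
  · have : l.length ≤ 1 := hsmall (by omega)
    have h1' : (l.length : ℝ) ≤ 1 := by exact_mod_cast this
    calc (l.length : ℝ) ≤ 1 := h1'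
      _ ≤ 7 / Real.log 2 * Real.log r := by
          rw [div_mul_eq_mul_div, le_div_iff₀ hlog2pos]
          nlinarith
  · have hmr : Real.logb 2 ((m : ℕ) : ℝ) ≤ Real.logb 2 (r : ℝ) := by
      apply (Real.logb_le_logb (by norm_num) (by positivity) (by positivity)).2
      exact_mod_cast le_of_lt m.isLt
    have hd : Real.log r / Real.log 2 * Real.log 2 = Real.log r :=
      div_mul_cancel₀ _ (ne_of_gt hlog2pos)
    calc (l.length : ℝ) ≤ 3 * (1 + Real.logb 2 ((m : ℕ) : ℝ)) + 1 := hlen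
      _ ≤ 3 * Real.logb 2 (r : ℝ) + 4 := by linarith
      _ = 3 * (Real.log r / Real.log 2) + 4 := by rw [Real.logb]
      _ ≤ 7 / Real.log 2 * Real.log r := by
          rw [div_mul_eq_mul_div, le_div_iff₀ hlog2pos]
          nlinarith
end
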